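/- arXiv:1612.00087 — 2 statements merged into one kernel-verified Lean document; each statement's English description precedes it below -/
import Mathlib

section
/- For real x with 0 < x < 1 and T > 0, the truncated Perron integral (1/(2πi)) ∫_{2-iT}^{2+iT} x^s/s ds is O(x^2/(T·log(1/x))). -/
/-!
Shift the line of integration to the right. For `0 < x < 1` the integrand `x ^ s / s` is
holomorphic on `Re s > 0` and decays like `x ^ (Re s)`, so by Cauchy's theorem on the rectangle
`[a, σ] × [-T, T]` the integral over `Re s = a` equals the two horizontal integrals plus the one
over `Re s = σ`. Each horizontal integral is at most `∫_a^∞ x ^ u / T du = x ^ a / (T log x⁻¹)`,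
and the one over `Re s = σ` is at most `2T x ^ σ / σ`, which vanishes as `σ → ∞`.
-/

open Complex intervalIntegral Filter Set Topology
open scoped Interval

lemma integral_const_rpow {x : ℝ} (hx0 : 0 < x) (hx1 : x ≠ 1) (a b : ℝ) :
    ∫ u in a..b, x ^ u = (x ^ b - x ^ a) / Real.log x := by
  have hlog : Real.log x ≠ 0 := Real.log_ne_zero_of_pos_of_ne_one hx0 hx1
  have hderiv : ∀ u : ℝ, HasDerivAt (fun v : ℝ => x ^ v / Real.log x) (x ^ u) u := fun u => by
    simpa [hlog] using (Real.hasStrictDerivAt_const_rpow hx0 u).hasDerivAt.div_const (Real.log x)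
  rw [integral_eq_sub_of_hasDerivAt (fun u _ => hderiv u)
    ((Real.continuous_const_rpow hx0.ne').intervalIntegrable a b), sub_div]

noncomputable def perronKernel (x : ℝ) (s : ℂ) : ℂ := (x : ℂ) ^ s / s

namespace perronKernel

variable {x : ℝ}

lemma norm_eq (hx : 0 < x) (s : ℂ) : ‖perronKernel x s‖ = x ^ s.re / ‖s‖ := by
  rw [perronKernel, norm_div, norm_cpow_eq_rpow_re_of_pos hx]

lemma differentiableOn_re_pos (hx : 0 < x) : DifferentiableOn ℂ (perronKernel x) {s | 0 < s.re} :=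
  fun s hs => ((differentiableAt_id.const_cpow (.inl (ofReal_ne_zero.2 hx.ne'))).div
    differentiableAt_id (by rintro (h : s = 0); simp [h] at hs)).differentiableWithinAt

lemma norm_integral_horizontal_le (hx0 : 0 < x) (hx1 : x < 1) {a b : ℝ} (hab : a ≤ b) {c : ℝ}
    (hc : c ≠ 0) :
    ‖∫ u in a..b, perronKernel x (u + c * I)‖ ≤ x ^ a / (|c| * Real.log x⁻¹) := by
  have hlog : 0 < Real.log x⁻¹ := Real.log_pos ((one_lt_inv₀ hx0).2 hx1)
  have hc' : 0 < |c| := abs_pos.2 hc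
  calc ‖∫ u in a..b, perronKernel x (u + c * I)‖
      ≤ ∫ u in a..b, x ^ u / |c| := by
        refine norm_integral_le_of_norm_le hab (.of_forall fun u _ => ?_)
          (((Real.continuous_const_rpow hx0.ne').div_const _).intervalIntegrable a b)
        have him : |c| ≤ ‖(u : ℂ) + c * I‖ := by simpa using abs_im_le_norm ((u : ℂ) + c * I)
        rw [norm_eq hx0]
        simpa using div_le_div_of_nonneg_left (Real.rpow_nonneg hx0.le u) hc' him
    _ = (x ^ a - x ^ b) / (|c| * Real.log x⁻¹) := by
        rw [integral_div, integral_const_rpow hx0 hx1.ne, Real.log_inv]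
        field_simp
        ring
    _ ≤ x ^ a / (|c| * Real.log x⁻¹) := by
        gcongr
        exact sub_le_self _ (Real.rpow_nonneg hx0.le b)

lemma norm_integral_vertical_le (hx : 0 < x) {σ : ℝ} (hσ : 0 < σ) (c d : ℝ) :
    ‖∫ y in c..d, perronKernel x (σ + y * I)‖ ≤ x ^ σ / σ * |d - c| := by
  refine norm_integral_le_of_norm_le_const fun y _ => ?_
  have hre : σ ≤ ‖(σ : ℂ) + y * I‖ := by
    simpa [abs_of_pos hσ] using abs_re_le_norm ((σ : ℂ) + y * I)
  rw [norm_eq hx]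
  simpa using div_le_div_of_nonneg_left (Real.rpow_nonneg hx.le σ) hσ hre

lemma I_mul_integral_vertical_eq (hx : 0 < x) {a σ : ℝ} (ha : 0 < a) (hσ : 0 < σ) (c d : ℝ) :
    I * ∫ y in c..d, perronKernel x (a + y * I) =
      (∫ u in a..σ, perronKernel x (u + c * I)) - (∫ u in a..σ, perronKernel x (u + d * I)) +
        I * ∫ y in c..d, perronKernel x (σ + y * I) := by
  have hrect : [[a, σ]] ×ℂ [[c, d]] ⊆ {s : ℂ | 0 < s.re} := fun s hs =>
    lt_of_lt_of_le (lt_min ha hσ) (Complex.mem_reProdIm.1 hs).1.1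
  have := integral_boundary_rect_eq_zero_of_differentiableOn (perronKernel x) ⟨a, c⟩ ⟨σ, d⟩
    ((differentiableOn_re_pos hx).mono hrect)
  simp only [smul_eq_mul] at this
  exact (sub_eq_zero.1 this).symm

theorem norm_integral_vertical_le_of_lt_one (hx0 : 0 < x) (hx1 : x < 1) {a T : ℝ} (ha : 0 < a)
    (hT : 0 < T) :
    ‖∫ t in (-T)..T, perronKernel x (a + t * I)‖ ≤ 2 * (x ^ a / (T * Real.log x⁻¹)) := by
  set B := x ^ a / (T * Real.log x⁻¹)
  have hhor : ∀ σ, a ≤ σ → ∀ c, |c| = T → ‖∫ u in a..σ, perronKernel x (u + c * I)‖ ≤ B := by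
    intro σ hσ c hc
    have := norm_integral_horizontal_le hx0 hx1 hσ (abs_pos.1 (hc ▸ hT))
    rwa [hc] at this
  have hshift : ∀ σ, a ≤ σ →
      ‖∫ t in (-T)..T, perronKernel x (a + t * I)‖ ≤ 2 * B + x ^ σ / σ * (2 * T) := by
    intro σ hσ
    have hσ0 : 0 < σ := ha.trans_le hσ
    calc ‖∫ t in (-T)..T, perronKernel x (a + t * I)‖
        = ‖I * ∫ t in (-T)..T, perronKernel x (a + t * I)‖ := by rw [norm_mul, norm_I, one_mul]
      _ ≤ ‖∫ u in a..σ, perronKernel x (u + ↑(-T) * I)‖ + ‖∫ u in a..σ, perronKernel x (u + T * I)‖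
            + ‖∫ t in (-T)..T, perronKernel x (σ + t * I)‖ := by
          rw [I_mul_integral_vertical_eq hx0 ha hσ0]
          refine (norm_add_le _ _).trans (add_le_add (norm_sub_le _ _) ?_)
          rw [norm_mul, norm_I, one_mul]
      _ ≤ B + B + x ^ σ / σ * |T - -T| := by
          gcongr
          · exact hhor σ hσ (-T) (by simp [hT.le])
          · exact hhor σ hσ T (abs_of_pos hT)
          · exact norm_integral_vertical_le hx0 hσ0 (-T) T
      _ = 2 * B + x ^ σ / σ * (2 * T) := by rw [abs_of_pos (by linarith)]; ring
  have hlim : Tendsto (fun σ => 2 * B + x ^ σ / σ * (2 * T)) atTop (𝓝 (2 * B)) := by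
    simpa using tendsto_const_nhds.add
      (((tendsto_rpow_atTop_of_base_lt_one x (by linarith) hx1).div_atTop tendsto_id).mul_const
        (2 * T))
  exact ge_of_tendsto hlim (eventually_atTop.2 ⟨a, hshift⟩)

end perronKernel

/-- For `0 < x < 1` and `T > 0`, the truncated Perron integral
`(1/(2πi)) ∫_{2-iT}^{2+iT} x^s/s ds` is `O(x²/(T·log(1/x)))`,
with an absolute implied constant. -/
theorem perron_integral_lt_one :
    ∃ C : ℝ, 0 < C ∧ ∀ x T : ℝ, 0 < x → x < 1 → 0 < T →
      ‖(1 / (2 * Real.pi * Complex.I)) *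
          (Complex.I * ∫ t in (-T)..T,
            (x : ℂ) ^ ((2 : ℂ) + t * Complex.I) / ((2 : ℂ) + t * Complex.I))‖
        ≤ C * (x ^ 2 / (T * Real.log x⁻¹)) := by
  refine ⟨1, one_pos, fun x T hx0 hx1 hT => ?_⟩
  have hbound := perronKernel.norm_integral_vertical_le_of_lt_one hx0 hx1 two_pos hT
  simp only [perronKernel, ofReal_ofNat, Real.rpow_two] at hbound
  have hB : 0 ≤ x ^ 2 / (T * Real.log x⁻¹) :=
    div_nonneg (sq_nonneg x) (mul_nonneg hT.le (Real.log_nonneg ((one_le_inv₀ hx0).2 hx1.le)))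
  rw [norm_mul, norm_mul, norm_I, one_mul, norm_div, norm_one, norm_mul, norm_mul, norm_I,
    norm_real, Real.norm_of_nonneg Real.pi_pos.le, RCLike.norm_ofNat, mul_one]
  calc 1 / (2 * Real.pi) * ‖_‖ ≤ 1 / (2 * Real.pi) * (2 * (x ^ 2 / (T * Real.log x⁻¹))) := by
        gcongr
    _ = x ^ 2 / (T * Real.log x⁻¹) / Real.pi := by field_simp
    _ ≤ 1 * (x ^ 2 / (T * Real.log x⁻¹)) := by
        rw [one_mul]
        exact div_le_self hB (by linarith [Real.pi_gt_three])
end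

section
/- Let K be a number field. If j_K(x) − j_K(x−1) = O(x^{1/2+ε}) for all ε > 0, then the tail of the Möbius Dirichlet series satisfies ∑_{N𝔞 > x} μ(𝔞)/N𝔞^m = O(x^{3/2+ε−m}) for every integer m ≥ 2 and every ε > 0. -/
/-!
The hypothesis says that the number `a n = j_K(n) - j_K(n - 1)` of ideals of norm `n` is
`O(n ^ (1/2 + ε))`, so `∑ 𝔞, 1 / N𝔞 ^ s = ∑ n, a n / n ^ s` converges for every `s > 3/2`.
Rankin's trick bounds the tail: for `N𝔞 > x` and `s ≤ m` we have
`1 / N𝔞 ^ m ≤ x ^ (s - m) / N𝔞 ^ s`, hence `|∑_{N𝔞 > x} μ(𝔞) / N𝔞 ^ m| ≤ x ^ (s - m) ∑ 𝔞, 1 / N𝔞 ^ s`.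
Take `s = 3/2 + δ` with `0 < δ ≤ ε` small enough that `s ≤ m`.
-/
open NumberField Ideal Filter Asymptotics UniqueFactorizationMonoid

/-- The ideal-counting function: the number of nonzero ideals of `𝓞 K` of norm at most `x`. -/
noncomputable def idealCount (K : Type*) [Field K] [NumberField K] (x : ℝ) : ℕ :=
  Nat.card {I : Ideal (𝓞 K) // I ≠ ⊥ ∧ (Ideal.absNorm I : ℝ) ≤ x}

open Classical in
/-- The Möbius function on nonzero ideals of the ring of integers. -/
noncomputable def idealMoebius (K : Type*) [Field K] [NumberField K] (I : Ideal (𝓞 K)) : ℤ :=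
  if Squarefree I then (-1) ^ (normalizedFactors I).card else 0

open Classical in
/-- The tail `∑_{N𝔞 > x} μ(𝔞)/N𝔞^m` of the Möbius Dirichlet series. -/
noncomputable def moebiusTail (K : Type*) [Field K] [NumberField K] (m : ℕ) (x : ℝ) : ℝ :=
  ∑' I : {I : Ideal (𝓞 K) // I ≠ ⊥},
    if x < (Ideal.absNorm (I : Ideal (𝓞 K)) : ℝ) then
      (idealMoebius K (I : Ideal (𝓞 K)) : ℝ) / (Ideal.absNorm (I : Ideal (𝓞 K)) : ℝ) ^ (m : ℝ)
    else 0

theorem isBigO_rpow_atTop_of_le {a b : ℝ} (hab : a ≤ b) :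
    (fun x : ℝ => x ^ a) =O[atTop] fun x => x ^ b := by
  refine IsBigO.of_bound 1 ?_
  filter_upwards [eventually_ge_atTop 1] with x hx
  rw [one_mul, Real.norm_of_nonneg (by positivity), Real.norm_of_nonneg (by positivity)]
  exact Real.rpow_le_rpow_of_exponent_le hx hab

theorem summable_comp_of_summable_card_mul {ι : Type*} (N : ι → ℕ)
    (hN : ∀ n, {i | N i = n}.Finite) {f : ℕ → ℝ} (hf : 0 ≤ f)
    (h : Summable fun n => Nat.card {i // N i = n} * f n) :
    Summable fun i => f (N i) := by
  refine (summable_partition (fun i => hf (N i)) (s := fun n => {i | N i = n})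
    fun i => ⟨N i, rfl, fun n hn => hn.symm⟩).2 ⟨fun n => (hN n).summable fun i => f (N i), ?_⟩
  refine h.congr fun n => ?_
  have : Fintype {i | N i = n} := (hN n).fintype
  calc (Nat.card {i // N i = n} : ℝ) * f n = ∑ _i : {i | N i = n}, f n := by
        rw [Finset.sum_const, Finset.card_univ, ← Nat.card_eq_fintype_card, nsmul_eq_mul]; rfl
    _ = ∑' i : {i | N i = n}, f (N i) := by
      rw [tsum_fintype]
      exact Finset.sum_congr rfl fun i _ => by rw [i.2]

theorem isBigO_tsum_ite_lt_div_rpow {ι : Type*} (N c : ι → ℝ) {s t : ℝ} (hst : s ≤ t)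
    (hN : ∀ i, 0 ≤ N i) (hc : ∀ i, |c i| ≤ 1) (hs : Summable fun i => 1 / N i ^ s) :
    (fun x : ℝ => ∑' i, if x < N i then c i / N i ^ t else 0) =O[atTop]
      fun x => x ^ (s - t) := by
  refine IsBigO.of_bound (∑' i, 1 / N i ^ s) ?_
  filter_upwards [eventually_gt_atTop 0] with x hx
  have hterm : ∀ i, ‖if x < N i then c i / N i ^ t else 0‖ ≤ x ^ (s - t) * (1 / N i ^ s) := by
    intro i
    have hNs : 0 ≤ 1 / N i ^ s := one_div_nonneg.2 (Real.rpow_nonneg (hN i) s)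
    split_ifs with hxN
    · have hNi : 0 < N i := hx.trans hxN
      calc ‖c i / N i ^ t‖ ≤ 1 / N i ^ t := by
            rw [Real.norm_eq_abs, abs_div, abs_of_pos (Real.rpow_pos_of_pos hNi t)]
            gcongr
            exact hc i
        _ = N i ^ (s - t) * (1 / N i ^ s) := by
            rw [Real.rpow_sub hNi]; field_simp
        _ ≤ x ^ (s - t) * (1 / N i ^ s) := by
            exact mul_le_mul_of_nonneg_right
              (Real.rpow_le_rpow_of_nonpos hx hxN.le (sub_nonpos.2 hst)) hNs
    · rw [norm_zero]
      positivity
  calc ‖∑' i, if x < N i then c i / N i ^ t else 0‖ ≤ x ^ (s - t) * ∑' i, 1 / N i ^ s :=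
        tsum_of_norm_bounded (hs.hasSum.mul_left _) hterm
    _ = (∑' i, 1 / N i ^ s) * ‖x ^ (s - t)‖ := by
        rw [Real.norm_of_nonneg (by positivity), mul_comm]

noncomputable def idealCountOfNorm (K : Type*) [Field K] [NumberField K] (n : ℕ) : ℕ :=
  Nat.card {I : Ideal (𝓞 K) // absNorm I = n}

section

variable (K : Type*) [Field K] [NumberField K]

theorem idealCount_natCast (n : ℕ) :
    idealCount K n = {I : Ideal (𝓞 K) | I ≠ ⊥ ∧ absNorm I ≤ n}.ncard := by
  simp only [idealCount, Nat.cast_le, ← Nat.card_coe_set_eq]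
  rfl

theorem idealCount_natCast_add_one (n : ℕ) :
    idealCount K ↑(n + 1) = idealCount K n + idealCountOfNorm K (n + 1) := by
  have hsplit : {I : Ideal (𝓞 K) | I ≠ ⊥ ∧ absNorm I ≤ n + 1} =
      {I | I ≠ ⊥ ∧ absNorm I ≤ n} ∪ {I | absNorm I = n + 1} := by
    ext I
    simp only [Set.mem_ofPred_eq, Set.mem_union, ne_eq, ← absNorm_eq_zero_iff]
    omega
  have hdisj : Disjoint {I : Ideal (𝓞 K) | I ≠ ⊥ ∧ absNorm I ≤ n} {I | absNorm I = n + 1} :=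
    Set.disjoint_left.2 fun I hle heq => by simp only [Set.mem_ofPred_eq] at hle heq; omega
  rw [idealCount_natCast, idealCount_natCast, hsplit,
    Set.ncard_union_eq hdisj ((finite_setOfPred_absNorm_le n).subset fun I hI => hI.2)
      (finite_setOfPred_absNorm_eq _), idealCountOfNorm, ← Nat.card_coe_set_eq]
  rfl

theorem isBigO_idealCountOfNorm {q : ℝ}
    (hq : (fun x : ℝ => (idealCount K x : ℝ) - (idealCount K (x - 1) : ℝ)) =O[atTop]
      fun x => x ^ q) :
    (fun n : ℕ => (idealCountOfNorm K n : ℝ)) =O[atTop] fun n => (n : ℝ) ^ q := by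
  refine (hq.comp_tendsto tendsto_natCast_atTop_atTop).congr' ?_ EventuallyEq.rfl
  filter_upwards [eventually_ge_atTop 1] with n hn
  obtain ⟨k, rfl⟩ := Nat.exists_eq_add_of_le' hn
  rw [Function.comp_apply, idealCount_natCast_add_one, Nat.cast_succ, add_sub_cancel_right]
  push_cast
  ring

theorem summable_one_div_absNorm_rpow {q s : ℝ}
    (ha : (fun n : ℕ => (idealCountOfNorm K n : ℝ)) =O[atTop] fun n => (n : ℝ) ^ q)
    (hs : q + 1 < s) :
    Summable fun I : Ideal (𝓞 K) => 1 / (absNorm I : ℝ) ^ s := by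
  have hterms : (fun n : ℕ => (idealCountOfNorm K n : ℝ) * (1 / (n : ℝ) ^ s)) =O[atTop]
      fun n => (n : ℝ) ^ (q - s) := by
    refine (ha.mul (isBigO_refl _ _)).congr' EventuallyEq.rfl ?_
    filter_upwards [eventually_gt_atTop 0] with n hn
    rw [Real.rpow_sub (by positivity)]
    field_simp
  have hf : (0 : ℕ → ℝ) ≤ fun n : ℕ => 1 / (n : ℝ) ^ s := fun n => by positivity
  have h2 := summable_of_isBigO_nat (Real.summable_nat_rpow.2 (by linarith)) hterms
  exact summable_comp_of_summable_card_mul (f := fun n : ℕ => 1 / (n : ℝ) ^ s)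
    (fun I : Ideal (𝓞 K) => absNorm I) finite_setOfPred_absNorm_eq hf h2

theorem abs_idealMoebius_le (I : Ideal (𝓞 K)) : |(idealMoebius K I : ℝ)| ≤ 1 := by
  unfold idealMoebius
  split_ifs <;> simp

end

/-- If `j_K(x) − j_K(x−1) = O(x^{1/2+ε})` for all `ε > 0`, then
`∑_{N𝔞 > x} μ(𝔞)/N𝔞^m = O(x^{3/2+ε−m})` for every `m ≥ 2` and every `ε > 0`. -/
theorem moebiusTail_isBigO (K : Type*) [Field K] [NumberField K]
    (hj : ∀ ε : ℝ, 0 < ε →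
      (fun x : ℝ => (idealCount K x : ℝ) - (idealCount K (x - 1) : ℝ))
        =O[atTop] fun x => x ^ (1 / 2 + ε)) :
    ∀ m : ℕ, 2 ≤ m → ∀ ε : ℝ, 0 < ε →
      (fun x : ℝ => moebiusTail K m x) =O[atTop] fun x => x ^ (3 / 2 + ε - (m : ℝ)) := by
  intro m hm ε hε
  obtain ⟨δ, hδ, hδε, hδm⟩ : ∃ δ : ℝ, 0 < δ ∧ δ ≤ ε ∧ 3 / 2 + δ ≤ m :=
    ⟨min ε (1 / 4), lt_min hε (by norm_num), min_le_left _ _, by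
      have : (2 : ℝ) ≤ m := by exact_mod_cast hm
      linarith [min_le_right ε (1 / 4)]⟩
  have hsum : Summable fun I : {I : Ideal (𝓞 K) // I ≠ ⊥} =>
      1 / (absNorm I.1 : ℝ) ^ (3 / 2 + δ) :=
    (summable_one_div_absNorm_rpow K (isBigO_idealCountOfNorm K (hj (δ / 2) (by positivity)))
      (by linarith)).subtype (· ≠ ⊥)
  have htail := isBigO_tsum_ite_lt_div_rpow
    (fun I : {I : Ideal (𝓞 K) // I ≠ ⊥} => (absNorm I.1 : ℝ))
    (fun I => idealMoebius K I.1) (s := 3 / 2 + δ) (t := m) hδm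
    (fun _ => Nat.cast_nonneg _) (fun I => abs_idealMoebius_le K I.1) hsum
  exact htail.trans (isBigO_rpow_atTop_of_le (by linarith))
end
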